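/- arXiv:2509.20133 — 2 statements merged into one kernel-verified Lean document; each statement's English description precedes it below -/
import Mathlib

section
/- Let T be a positive linear map on B(H) and A a positive operator with T(A) ≤ A. If the sequence (T^n(A)) converges monotonically (decreasing) to 0 pointwise on a finite-dimensional support space, then there exist n₀ ∈ ℕ and 0 ≤ κ < 1 such that T^{n₀}(A) ≤ κ A. -/
open scoped InnerProductSpace
open Filter Topology

/-- The Loewner order on bounded operators: `A ≤ B` iff `B - A` is positive. -/
def LoewnerLE {H : Type*} [NormedAddCommGroup H] [InnerProductSpace ℂ H] [CompleteSpace H]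
    (A B : H →L[ℂ] H) : Prop := (B - A).IsPositive

/-!
Every `Bₙ = Tⁿ(A)` satisfies `Bₙ = Q Bₙ Q`, so it is determined by its compression to the
finite-dimensional space `range Q`; there weak convergence to `0` is norm convergence, hence
`‖Bₙ‖ → 0`. A self-adjoint `B = Q B Q` satisfies `B ≤ ‖B‖ Q`, and `c Q ≤ A`, so
`B_N ≤ (‖B_N‖ / c) A` with `‖B_N‖ / c < 1` as soon as `‖B_N‖ < c`.
-/

theorem IsSelfAdjoint.le_norm_smul_of_eq_mul_mul {A : Type*} [CStarAlgebra A] [PartialOrder A]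
    [StarOrderedRing A] {a q : A} (ha : IsSelfAdjoint a) (hq : IsSelfAdjoint q)
    (hq_idem : IsIdempotentElem q) (haq : a = q * a * q) : a ≤ ‖a‖ • q :=
  calc a = q * a * q := haq
    _ ≤ q * algebraMap ℝ A ‖a‖ * q := hq.conjugate_le_conjugate ha.le_algebraMap_norm_self
    _ = ‖a‖ • q := by
      rw [Algebra.algebraMap_eq_smul_one, mul_smul_comm, mul_one, smul_mul_assoc, hq_idem.eq]

section Tendsto

variable {ι : Type*} {l : Filter ι}

theorem tendsto_inner_apply_of_tendsto_inner_self {V : Type*} [NormedAddCommGroup V]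
    [InnerProductSpace ℂ V] {B : ι → V →L[ℂ] V}
    (h : ∀ x, Tendsto (fun n => ⟪x, B n x⟫_ℂ) l (𝓝 0)) (x y : V) :
    Tendsto (fun n => ⟪x, B n y⟫_ℂ) l (𝓝 0) := by
  have h' : ∀ z, Tendsto (fun n => ⟪B n z, z⟫_ℂ) l (𝓝 0) := fun z => by
    simpa only [Complex.star_def, inner_conj_symm, star_zero] using (h z).star
  have hpol : Tendsto (fun n => ⟪B n y, x⟫_ℂ) l (𝓝 0) := by
    have := ((((h' (x + y)).sub (h' (x - y))).add
      ((h' (x + Complex.I • y)).const_mul Complex.I)).sub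
        ((h' (x - Complex.I • y)).const_mul Complex.I)).div_const 4
    simpa only [← ContinuousLinearMap.coe_coe, ← inner_map_polarization, sub_zero, add_zero,
      mul_zero, zero_div] using this
  simpa only [Complex.star_def, inner_conj_symm, star_zero] using hpol.star

theorem tendsto_zero_of_tendsto_inner {𝕜 E : Type*} [RCLike 𝕜] [NormedAddCommGroup E]
    [InnerProductSpace 𝕜 E] [FiniteDimensional 𝕜 E] {u : ι → E}
    (h : ∀ x, Tendsto (fun n => ⟪x, u n⟫_𝕜) l (𝓝 0)) : Tendsto u l (𝓝 0) := by
  let b := stdOrthonormalBasis 𝕜 E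
  have hu : u = fun n => ∑ i, ⟪b i, u n⟫_𝕜 • b i := funext fun n => (b.sum_repr' (u n)).symm
  rw [hu]
  simpa using tendsto_finsetSum Finset.univ fun i _ => (h (b i)).smul_const (b i)

theorem ContinuousLinearMap.tendsto_zero_of_tendsto_apply {𝕜 E F : Type*}
    [NontriviallyNormedField 𝕜] [CompleteSpace 𝕜] [NormedAddCommGroup E] [NormedSpace 𝕜 E]
    [FiniteDimensional 𝕜 E] [NormedAddCommGroup F] [NormedSpace 𝕜 F] {f : ι → E →L[𝕜] F}
    (h : ∀ x, Tendsto (fun n => f n x) l (𝓝 0)) : Tendsto f l (𝓝 0) := by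
  let v := Module.finBasis 𝕜 E
  obtain ⟨C, -, hC⟩ := v.exists_opNorm_le (F := F)
  refine squeeze_zero_norm (fun n => hC (M := ∑ i, ‖f n (v i)‖) (by positivity)
    fun i => Finset.single_le_sum (fun j _ => norm_nonneg (f n (v j))) (Finset.mem_univ i)) ?_
  simpa using (tendsto_finsetSum Finset.univ fun i _ => (h (v i)).norm).const_mul C

end Tendsto

theorem ContinuousLinearMap.tendsto_zero_of_tendsto_inner_self_of_eq_mul_mul {ι H : Type*}
    {l : Filter ι} [NormedAddCommGroup H] [InnerProductSpace ℂ H] {B : ι → H →L[ℂ] H}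
    {Q : H →L[ℂ] H} (hQ : IsIdempotentElem Q)
    [FiniteDimensional ℂ (LinearMap.range (Q : H →ₗ[ℂ] H))] (hBQ : ∀ n, B n = Q * B n * Q)
    (h : ∀ x, Tendsto (fun n => ⟪x, B n x⟫_ℂ) l (𝓝 0)) : Tendsto B l (𝓝 0) := by
  set V := LinearMap.range (Q : H →ₗ[ℂ] H)
  have hmem : ∀ n x, B n x ∈ V := fun n x => by
    rw [hBQ n]
    exact ⟨B n (Q x), rfl⟩
  have hBQ' : ∀ n, B n * Q = B n := fun n => by rw [hBQ n, mul_assoc, hQ.eq]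
  have hC : Tendsto (fun n => (B n).comp V.subtypeL) l (𝓝 0) := by
    refine ContinuousLinearMap.tendsto_zero_of_tendsto_apply fun v => ?_
    have hw : Tendsto (fun n => (⟨B n v, hmem n v⟩ : V)) l (𝓝 0) :=
      tendsto_zero_of_tendsto_inner fun w => tendsto_inner_apply_of_tendsto_inner_self h w v
    exact (continuous_subtype_val.tendsto 0).comp hw
  let Q' : H →L[ℂ] V := Q.codRestrict V fun x => ⟨x, rfl⟩
  have hB : ∀ n, B n = ((B n).comp V.subtypeL).comp Q' := fun n => by
    ext x
    exact congrArg (· x) (hBQ' n).symm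
  refine squeeze_zero_norm (fun n => ?_)
    (by simpa using ((tendsto_zero_iff_norm_tendsto_zero (E := V →L[ℂ] H)).mp hC).mul_const ‖Q'‖)
  calc ‖B n‖ = ‖((B n).comp V.subtypeL).comp Q'‖ := congrArg norm (hB n)
    _ ≤ ‖(B n).comp V.subtypeL‖ * ‖Q'‖ := opNorm_comp_le _ _

theorem stmt1_general {H : Type*} [NormedAddCommGroup H] [InnerProductSpace ℂ H] [CompleteSpace H]
    (T : (H →L[ℂ] H) →ₗ[ℂ] (H →L[ℂ] H))
    (hTpos : ∀ B : H →L[ℂ] H, B.IsPositive → (T B).IsPositive)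
    (A : H →L[ℂ] H) (hA : A.IsPositive)
    (Q : H →L[ℂ] H) (hQproj : IsIdempotentElem Q) (hQsa : IsSelfAdjoint Q)
    (hQfin : FiniteDimensional ℂ (LinearMap.range (Q : H →ₗ[ℂ] H)))
    (hbelow : ∃ c : ℝ, 0 < c ∧ LoewnerLE (c • Q) A)
    (hsupport : ∀ n : ℕ, (T ^ n) A = Q * ((T ^ n) A) * Q)
    (hto0 : ∀ x : H, Tendsto (fun n : ℕ => (⟪x, ((T ^ n) A) x⟫_ℂ)) atTop (nhds 0)) :
    ∃ (n₀ : ℕ) (κ : ℝ), 0 ≤ κ ∧ κ < 1 ∧ LoewnerLE ((T ^ n₀) A) (κ • A) := by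
  obtain ⟨c, hc, hcQ⟩ := hbelow
  have hpos : ∀ n, ((T ^ n) A).IsPositive := by
    intro n
    induction n with
    | zero => exact hA
    | succ n ih => exact pow_succ' T n ▸ hTpos _ ih
  have hnorm : Tendsto (fun n => ‖(T ^ n) A‖) atTop (𝓝 0) :=
    tendsto_zero_iff_norm_tendsto_zero.mp <|
      ContinuousLinearMap.tendsto_zero_of_tendsto_inner_self_of_eq_mul_mul hQproj hsupport hto0
  obtain ⟨N, hN⟩ := (hnorm.eventually_lt_const hc).exists
  refine ⟨N, ‖(T ^ N) A‖ / c, by positivity, (div_lt_one hc).mpr hN, ?_⟩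
  -- `LoewnerLE` unfolds to the Loewner order of the C⋆-algebra `H →L[ℂ] H`.
  calc (T ^ N) A ≤ ‖(T ^ N) A‖ • Q :=
        (hpos N).isSelfAdjoint.le_norm_smul_of_eq_mul_mul hQsa hQproj (hsupport N)
    _ = (‖(T ^ N) A‖ / c) • (c • Q) := by rw [smul_smul, div_mul_cancel₀ _ hc.ne']
    _ ≤ (‖(T ^ N) A‖ / c) • A := smul_le_smul_of_nonneg_left hcQ (by positivity)

/-- `T` a positive linear map, `A` positive with `T(A) ≤ A`, supported on a
finite-dimensional support space (with support projection `Q`, and `A` bounded below by a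
positive multiple of `Q`), and `T^n(A)` decreasing to `0` pointwise (weak*), each `T^n(A)`
supported in `supp A`.  Then there are `n₀` and `0 ≤ κ < 1` with `T^{n₀}(A) ≤ κ A`. -/
theorem stmt1 {H : Type*} [NormedAddCommGroup H] [InnerProductSpace ℂ H] [CompleteSpace H]
    (T : (H →L[ℂ] H) →ₗ[ℂ] (H →L[ℂ] H))
    (hTpos : ∀ B : H →L[ℂ] H, B.IsPositive → (T B).IsPositive)
    (A : H →L[ℂ] H) (hA : A.IsPositive) (hTA : LoewnerLE (T A) A)
    (Q : H →L[ℂ] H) (hQproj : IsIdempotentElem Q) (hQsa : IsSelfAdjoint Q)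
    (hQfin : FiniteDimensional ℂ (LinearMap.range (Q : H →ₗ[ℂ] H)))
    (hsupp : ∀ x : H, Q x = 0 → A x = 0)
    (hbelow : ∃ c : ℝ, 0 < c ∧ LoewnerLE (c • Q) A)
    (hsupport : ∀ n : ℕ, (T ^ n) A = Q * ((T ^ n) A) * Q)
    (hdecr : ∀ n : ℕ, LoewnerLE ((T ^ (n + 1)) A) ((T ^ n) A))
    (hto0 : ∀ x : H, Tendsto (fun n : ℕ => (⟪x, ((T ^ n) A) x⟫_ℂ)) atTop (nhds 0)) :
    ∃ (n₀ : ℕ) (κ : ℝ), 0 ≤ κ ∧ κ < 1 ∧ LoewnerLE ((T ^ n₀) A) (κ • A) :=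
  stmt1_general T hTpos A hA Q hQproj hQsa hQfin hbelow hsupport hto0
end

section
/- Let T be an irreducible positive trace-preserving linear map on d×d matrices (a quantum channel) whose peripheral spectrum consists of the m-th roots of unity, each a simple eigenvalue, with all other eigenvalues of modulus < 1. If for some irrational multiple α of the period, T^α (defined via a logarithm consistent with a one-parameter semigroup e^{tL} with T = e^{L}) is also irreducible with peripheral eigenvalues that are roots of unity, then m = 1, i.e., T is primitive. -/
/-!
If `m ≥ 2`, pick a primitive `m`-th root of unity `z₀`. Its eigenspace for `T = exp L` is a line
preserved by `L`, which commutes with `T`, so it is spanned by an eigenvector `v` of `L` whose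
eigenvalue `μ` satisfies `exp μ = z₀`; hence `μ = 2πi q` with `q` rational and nonzero. Then `v` is
an eigenvector of `exp (α L)` with eigenvalue `exp (2πi α q)`, which lies on the unit circle, so it is
a root of unity by hypothesis. This forces `α q` to be rational, contradicting `Irrational α`.
-/

open Complex Real

section

variable {𝕜 V : Type*} [RCLike 𝕜] [NormedAddCommGroup V] [NormedSpace 𝕜 V]

theorem ContinuousLinearMap.mem_spectrum_of_apply_eq_smul {f : V →L[𝕜] V} {μ : 𝕜} {v : V}
    (hv0 : v ≠ 0) (hv : f v = μ • v) : μ ∈ spectrum 𝕜 f := by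
  rintro ⟨u, hu⟩
  have huv : (u : V →L[𝕜] V) v = 0 := by simp [hu, hv]
  have := congr((↑u⁻¹ : V →L[𝕜] V) $huv)
  rw [← mul_apply_eq_comp, Units.inv_mul, one_apply_eq_self, map_zero] at this
  exact hv0 this

variable [CompleteSpace V]

theorem NormedSpace.exp_apply_of_apply_eq_smul {L : V →L[𝕜] V} {μ : 𝕜} {v : V}
    (hv : L v = μ • v) : NormedSpace.exp L v = NormedSpace.exp μ • v := by
  have hpow (n : ℕ) : (L ^ n) v = μ ^ n • v := by
    induction n with
    | zero => simp
    | succ n ih =>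
      rw [pow_succ', mul_apply_eq_comp, ih, map_smul, hv, smul_smul, pow_succ]
  have hL := (exp_series_hasSum_exp' (𝕂 := 𝕜) L).mapL (ContinuousLinearMap.apply 𝕜 V v)
  have hμ := (exp_series_hasSum_exp' (𝕂 := 𝕜) μ).smul_const v
  simp only [ContinuousLinearMap.apply_apply, smul_apply, hpow, smul_smul, smul_eq_mul] at hL hμ
  exact hL.unique hμ

end

theorem Module.End.exists_common_eigenvector_of_finrank_eigenspace_eq_one {K V : Type*}
    [Field K] [AddCommGroup V] [Module K V] {f g : Module.End K V} (hfg : Commute f g) {z : K}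
    (h : Module.finrank K (f.eigenspace z) = 1) :
    ∃ v ≠ 0, f v = z • v ∧ ∃ μ : K, g v = μ • v := by
  obtain ⟨v, hv, hv0⟩ := Submodule.exists_mem_ne_zero_of_ne_bot (p := f.eigenspace z)
    fun hbot ↦ by rw [hbot, finrank_bot] at h; exact zero_ne_one h
  have hgv : g v ∈ f.eigenspace z := mapsTo_genEigenspace_of_comm hfg z 1 hv
  obtain ⟨μ, hμ⟩ := (finrank_eq_one_iff_of_nonzero' (⟨v, hv⟩ : f.eigenspace z)
    (by simpa using hv0)).mp h ⟨g v, hgv⟩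
  exact ⟨v, hv0, mem_eigenspace_iff.mp hv, μ, congr_arg Subtype.val hμ.symm⟩

theorem Complex.exists_rat_eq_of_exp_pow_eq_one {z : ℂ} {n : ℕ} (hn : n ≠ 0)
    (h : exp z ^ n = 1) : ∃ q : ℚ, z = q * (2 * π * I) := by
  rw [← exp_nat_mul, exp_eq_one_iff] at h
  obtain ⟨j, hj⟩ := h
  refine ⟨j / n, ?_⟩
  push_cast
  rw [div_mul_eq_mul_div, eq_div_iff (by exact_mod_cast hn), ← hj]
  ring

theorem Irrational.exp_mul_rat_mul_two_pi_I_pow_ne_one {α : ℝ} (hα : Irrational α) {q : ℚ}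
    (hq : q ≠ 0) {n : ℕ} (hn : n ≠ 0) : exp (α * (q * (2 * π * I))) ^ n ≠ 1 := by
  intro hpow
  obtain ⟨q', hq'⟩ := exists_rat_eq_of_exp_pow_eq_one hn hpow
  have hαq : α * q = q' := by
    have : ((α * q : ℝ) : ℂ) = (q' : ℝ) := by
      push_cast
      exact mul_right_cancel₀ two_pi_I_ne_zero (by rw [← hq']; ring)
    exact_mod_cast this
  exact Rat.not_irrational q' (hαq ▸ hα.mul_ratCast hq)

theorem stmt11_general {V : Type*} [NormedAddCommGroup V] [NormedSpace ℂ V] [CompleteSpace V]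
    (L T : V →L[ℂ] V) (hT : T = NormedSpace.exp L)
    (m : ℕ) (hm : 0 < m)
    (hsimple : ∀ z : ℂ, z ^ m = 1 →
      Module.finrank ℂ (Module.End.eigenspace (T : Module.End ℂ V) z) = 1)
    (α : ℝ) (hαirr : Irrational α)
    (Tα : V →L[ℂ] V) (hTα : Tα = NormedSpace.exp (α • L))
    (hTαper : ∀ z ∈ spectrum ℂ Tα, ‖z‖ = 1 → ∃ n : ℕ, 0 < n ∧ z ^ n = 1) :
    m = 1 := by
  by_contra hm1
  have hz₀ : IsPrimitiveRoot (exp (2 * π * I / m)) m := isPrimitiveRoot_exp m hm.ne'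
  have hTL : Commute T L := hT ▸ Commute.exp_left (Commute.refl L)
  obtain ⟨v, hv0, hTv, μ, hLv⟩ :=
    Module.End.exists_common_eigenvector_of_finrank_eigenspace_eq_one
      (hTL.map ContinuousLinearMap.toLinearMapRingHom) (hsimple _ hz₀.pow_eq_one)
  replace hLv : L v = μ • v := hLv
  have hexpμ : exp μ = exp (2 * π * I / m) := by
    have hTv' : T v = exp μ • v := by
      rw [hT, NormedSpace.exp_apply_of_apply_eq_smul hLv, Complex.exp_eq_exp_ℂ]
    exact smul_left_injective ℂ hv0 (hTv'.symm.trans hTv)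
  obtain ⟨q, rfl⟩ := exists_rat_eq_of_exp_pow_eq_one hm.ne' (hexpμ ▸ hz₀.pow_eq_one)
  have hq : q ≠ 0 := by
    rintro rfl
    exact hz₀.ne_one (by omega) (by simpa using hexpμ.symm)
  have hαLv : (α • L) v = ((α : ℂ) * (q * (2 * π * I))) • v := by
    rw [smul_apply, hLv, ← Complex.coe_smul, smul_smul]
  have hTαv : Tα v = exp (α * (q * (2 * π * I))) • v := by
    rw [hTα, NormedSpace.exp_apply_of_apply_eq_smul hαLv, Complex.exp_eq_exp_ℂ]
  obtain ⟨n, hn, hpow⟩ := hTαper _ (ContinuousLinearMap.mem_spectrum_of_apply_eq_smul hv0 hTαv)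
    (by simp [Complex.norm_exp])
  exact hαirr.exp_mul_rat_mul_two_pi_I_pow_ne_one hq hn.ne' hpow

/-- let `T = e^L` belong to a one-parameter semigroup `e^{tL}` of maps on a
finite-dimensional space, with spectral radius `≤ 1`, peripheral spectrum exactly the
`m`-th roots of unity, each a simple eigenvalue, all other eigenvalues of modulus `< 1`.
If for some irrational `α > 0` the map `T^α = e^{αL}` is also irreducible (1 a simple
eigenvalue) with all peripheral eigenvalues roots of unity, then `m = 1`
(`T` is primitive). -/
theorem stmt11 {V : Type*} [NormedAddCommGroup V] [NormedSpace ℂ V] [CompleteSpace V]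
    [FiniteDimensional ℂ V]
    (L T : V →L[ℂ] V) (hT : T = NormedSpace.exp L)
    (m : ℕ) (hm : 0 < m)
    (hspec1 : ∀ z ∈ spectrum ℂ T, ‖z‖ ≤ 1)
    (hperiph : {z ∈ spectrum ℂ T | ‖z‖ = 1} = {z : ℂ | z ^ m = 1})
    (hsimple : ∀ z : ℂ, z ^ m = 1 →
      Module.finrank ℂ (Module.End.eigenspace (T : Module.End ℂ V) z) = 1)
    (α : ℝ) (hα0 : 0 < α) (hαirr : Irrational α)
    (Tα : V →L[ℂ] V) (hTα : Tα = NormedSpace.exp (α • L))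
    (hTαirr : Module.finrank ℂ (Module.End.eigenspace (Tα : Module.End ℂ V) 1) = 1)
    (hTαper : ∀ z ∈ spectrum ℂ Tα, ‖z‖ = 1 → ∃ n : ℕ, 0 < n ∧ z ^ n = 1) :
    m = 1 :=
  stmt11_general L T hT m hm hsimple α hαirr Tα hTα hTαper
end
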